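/- arXiv:math/9901034 — 6 statements merged into one kernel-verified Lean document; each statement's English description precedes it below -/
import Mathlib

section
/- For n ≥ 2, the smallest Lie subalgebra of Vect_poly(ℝⁿ) containing the space Vect_{≤2}(ℝⁿ) of polynomial vector fields of degree at most 2 is Vect_poly(ℝⁿ) itself; that is, the Lie subalgebra generated by all polynomial vector fields of degree ≤ 2 equals the whole Lie algebra of polynomial vector fields. -/
open MvPolynomial

/-- Polynomial vector fields on ℝⁿ. -/
abbrev VF (n : ℕ) := Fin n → MvPolynomial (Fin n) ℝ

/-- The Lie bracket of polynomial vector fields: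
`[X,Y]ⁱ = ∑_j (X^j ∂_j Yⁱ − Y^j ∂_j Xⁱ)`. -/
noncomputable def vbracket {n : ℕ} (Xv Yv : VF n) : VF n :=
  fun i => ∑ j, (Xv j * pderiv j (Yv i) - Yv j * pderiv j (Xv i))

/-! The bracket of monomial fields is
`[x^a ∂_k, x^b ∂_i] = b_k x^(a+b-e_k) ∂_i - a_i x^(a+b-e_i) ∂_k`,
so bracketing with quadratic fields raises the degree by one. A monomial field `x^d ∂_i` of
degree `≥ 3` with some `d_p ≥ 1`, `p ≠ i`, comes from `x^(d-e_p) ∂_i` by bracketing with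
`x_k x_p ∂_k` or `x_i x_p ∂_i`. The pure powers `x_i^(a+2) ∂_i` need a second variable `x_k`:
`[x_i² ∂_k, x_i^a x_k ∂_i] = x_i^(a+2) ∂_i - 2 x_i^(a+1) x_k ∂_k`. -/

noncomputable def monomialField {n : ℕ} (d : Fin n →₀ ℕ) (i : Fin n) : VF n :=
  Pi.single i (monomial d 1)

def IsBracketClosed {n : ℕ} (S : Submodule ℝ (VF n)) : Prop :=
  ∀ X ∈ S, ∀ Y ∈ S, vbracket X Y ∈ S

section

variable {n : ℕ} {S : Submodule ℝ (VF n)}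

theorem vbracket_single (k i : Fin n) (f g : MvPolynomial (Fin n) ℝ) :
    vbracket (Pi.single k f) (Pi.single i g)
      = Pi.single i (f * pderiv k g) - Pi.single k (g * pderiv i f) := by
  funext l
  simp only [vbracket, Pi.sub_apply, Pi.single_apply, ite_mul, zero_mul]
  rw [Finset.sum_sub_distrib, Finset.sum_ite_eq' Finset.univ k, Finset.sum_ite_eq' Finset.univ i]
  simp only [Finset.mem_univ, if_true]
  split_ifs <;> simp

theorem vbracket_monomialField (a b : Fin n →₀ ℕ) (k i : Fin n) :
    vbracket (monomialField a k) (monomialField b i)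
      = (b k : ℝ) • monomialField (a + (b - Finsupp.single k 1)) i
        - (a i : ℝ) • monomialField (b + (a - Finsupp.single i 1)) k := by
  simp only [monomialField, vbracket_single, pderiv_monomial, monomial_mul, one_mul,
    ← Pi.single_smul', smul_monomial, smul_eq_mul, mul_one]

theorem totalDegree_monomialField_le (d : Fin n →₀ ℕ) (i j : Fin n) :
    (monomialField d i j).totalDegree ≤ d.degree := by
  rcases eq_or_ne j i with rfl | hji
  · rw [monomialField, Pi.single_eq_same]
    exact totalDegree_monomial_le d 1
  · simp [monomialField, Pi.single_eq_of_ne hji]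

theorem eq_top_of_monomialField_mem (h : ∀ d i, monomialField d i ∈ S) : S = ⊤ := by
  rw [eq_top_iff, ← (Pi.basis fun _ : Fin n => basisMonomials (Fin n) ℝ).span_eq,
    Submodule.span_le]
  rintro _ ⟨⟨i, d⟩, rfl⟩
  simpa [monomialField] using h d i

theorem mem_of_vbracket_eq_smul_sub (hS : IsBracketClosed S) {X Y A B : VF n} {c : ℝ}
    (hX : X ∈ S) (hY : Y ∈ S) (hB : B ∈ S) (hc : c ≠ 0) (h : vbracket X Y = c • A - B) :
    A ∈ S := by
  have hXY := hS X hX Y hY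
  rwa [h, Submodule.sub_mem_iff_left _ hB, Submodule.smul_mem_iff _ hc] at hXY

theorem monomialField_add_single_mem_of_ne (hS : IsBracketClosed S)
    (hlow : ∀ d i, d.degree ≤ 2 → monomialField d i ∈ S) {b : Fin n →₀ ℕ} {i k p : Fin n}
    (hki : k ≠ i) (hpi : p ≠ i) (hbk : 1 ≤ b k) (hb : monomialField b i ∈ S) :
    monomialField (b + Finsupp.single p 1) i ∈ S := by
  refine mem_of_vbracket_eq_smul_sub hS (hlow (Finsupp.single k 1 + Finsupp.single p 1) k
    (by simp)) hb S.zero_mem (c := b k) (by positivity) ?_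
  have hexp : Finsupp.single k 1 + Finsupp.single p 1 + (b - Finsupp.single k 1)
      = b + Finsupp.single p 1 := by
    ext j
    simp only [Finsupp.add_apply, Finsupp.tsub_apply, Finsupp.single_apply]
    split_ifs <;> subst_vars <;> omega
  rw [vbracket_monomialField, hexp]
  simp [hki, hpi]

theorem monomialField_add_single_mem_of_two_le (hS : IsBracketClosed S)
    (hlow : ∀ d i, d.degree ≤ 2 → monomialField d i ∈ S) {b : Fin n →₀ ℕ} {i k : Fin n}
    (hki : k ≠ i) (hbi : 2 ≤ b i) (hb : monomialField b i ∈ S) :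
    monomialField (b + Finsupp.single k 1) i ∈ S := by
  refine mem_of_vbracket_eq_smul_sub hS (hlow (Finsupp.single i 1 + Finsupp.single k 1) i
    (by simp)) hb S.zero_mem (c := b i - 1)
    (sub_ne_zero.2 (by norm_cast; omega)) ?_
  have hexp₁ : Finsupp.single i 1 + Finsupp.single k 1 + (b - Finsupp.single i 1)
      = b + Finsupp.single k 1 := by
    ext j
    simp only [Finsupp.add_apply, Finsupp.tsub_apply, Finsupp.single_apply]
    split_ifs <;> subst_vars <;> omega
  have hexp₂ : b + (Finsupp.single i 1 + Finsupp.single k 1 - Finsupp.single i 1)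
      = b + Finsupp.single k 1 := by
    ext j
    simp only [Finsupp.add_apply, Finsupp.tsub_apply, Finsupp.single_apply]
    split_ifs <;> subst_vars <;> omega
  rw [vbracket_monomialField, hexp₁, hexp₂]
  simp [hki, sub_smul]

theorem monomialField_single_add_two_mem (hS : IsBracketClosed S)
    (hlow : ∀ d i, d.degree ≤ 2 → monomialField d i ∈ S) {i k : Fin n} (hki : k ≠ i) {a : ℕ}
    (ha : 1 ≤ a) (hi : monomialField (Finsupp.single i a + Finsupp.single k 1) i ∈ S)
    (hk : monomialField (Finsupp.single i a + Finsupp.single k 1) k ∈ S) :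
    monomialField (Finsupp.single i (a + 2)) i ∈ S := by
  have hB : monomialField (Finsupp.single i a + Finsupp.single k 1 + Finsupp.single i 1) k ∈ S :=
    monomialField_add_single_mem_of_ne hS hlow hki.symm hki.symm (by simpa [hki] using ha) hk
  refine mem_of_vbracket_eq_smul_sub hS (hlow (Finsupp.single i 2) k (by simp)) hi
    (S.smul_mem 2 hB) one_ne_zero ?_
  have hexp₁ : Finsupp.single i 2 + (Finsupp.single i a + Finsupp.single k 1 - Finsupp.single k 1)
      = Finsupp.single i (a + 2) := by
    ext j
    simp only [Finsupp.add_apply, Finsupp.tsub_apply, Finsupp.single_apply]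
    split_ifs <;> subst_vars <;> omega
  have hexp₂ : Finsupp.single i a + Finsupp.single k 1 + (Finsupp.single i 2 - Finsupp.single i 1)
      = Finsupp.single i a + Finsupp.single k 1 + Finsupp.single i 1 := by
    ext j
    simp only [Finsupp.add_apply, Finsupp.tsub_apply, Finsupp.single_apply]
    split_ifs <;> subst_vars <;> omega
  rw [vbracket_monomialField, hexp₁, hexp₂]
  simp [hki]

theorem monomialField_mem (hn : 2 ≤ n) (hS : IsBracketClosed S)
    (hlow : ∀ d i, d.degree ≤ 2 → monomialField d i ∈ S) (d : Fin n →₀ ℕ) (i : Fin n) :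
    monomialField d i ∈ S := by
  induction hm : d.degree using Nat.strong_induction_on generalizing d i with
  | _ m ih =>
  by_cases hm2 : m ≤ 2
  · exact hlow d i (hm ▸ hm2)
  by_cases hoff : ∃ p ≠ i, 1 ≤ d p
  · obtain ⟨p, hpi, hdp⟩ := hoff
    obtain ⟨b, rfl⟩ : ∃ b, d = b + Finsupp.single p 1 :=
      ⟨d - Finsupp.single p 1, (tsub_add_cancel_of_le (Finsupp.single_le_iff.2 hdp)).symm⟩
    rw [map_add, Finsupp.degree_single] at hm
    have hb := ih _ (by omega) b i rfl
    by_cases hboff : ∃ k ≠ i, 1 ≤ b k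
    · obtain ⟨k, hki, hbk⟩ := hboff
      exact monomialField_add_single_mem_of_ne hS hlow hki hpi hbk hb
    · push Not at hboff
      have hbi : b.degree = b i := by
        rw [Finsupp.degree_eq_sum, Finset.sum_eq_single i (fun k _ hk => by
          have := hboff k hk; omega) (by simp)]
      exact monomialField_add_single_mem_of_two_le hS hlow hpi (by omega) hb
  · push Not at hoff
    have hd : d = Finsupp.single i (d i) := Finsupp.support_subset_singleton.1 fun k hk =>
      Finset.mem_singleton.2 <| by_contra fun hki => by
        have := hoff k hki; simp_all
    rw [hd, Finsupp.degree_single] at hm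
    rw [hd, hm]
    obtain ⟨a, rfl⟩ : ∃ a, m = a + 2 := ⟨m - 2, by omega⟩
    obtain ⟨k, hki⟩ : ∃ k, k ≠ i := Fintype.exists_ne_of_one_lt_card (by simp; omega) i
    have hdeg : (Finsupp.single i a + Finsupp.single k 1).degree < a + 2 := by simp
    exact monomialField_single_add_two_mem hS hlow hki (by omega) (ih _ hdeg _ i rfl)
      (ih _ hdeg _ k rfl)

end

/-- For `n ≥ 2`, the Lie subalgebra of `Vect_poly(ℝⁿ)` generated by the polynomial
vector fields of degree at most 2 is the whole Lie algebra: every Lie subalgebra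
containing `Vect_{≤2}(ℝⁿ)` equals `Vect_poly(ℝⁿ)`. -/
theorem lie_generated_by_degree_le_two (n : ℕ) (h2 : 2 ≤ n) :
    ∀ S : Submodule ℝ (VF n),
      (∀ Xv ∈ S, ∀ Yv ∈ S, vbracket Xv Yv ∈ S) →
      (∀ Xv : VF n, (∀ i, (Xv i).totalDegree ≤ 2) → Xv ∈ S) →
      S = ⊤ := by
  intro S hS hdeg
  refine eq_top_of_monomialField_mem (monomialField_mem h2 hS fun d i hd => hdeg _ fun j => ?_)
  exact (totalDegree_monomialField_le d i j).trans hd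
end

section
/- Let n = p + q ≥ 3 and G = diag(a₁,…,aₙ) with a_i = 1 for i ≤ p and a_i = −1 for i > p. Then so(p,q)⁺, the space of traceless matrices self-adjoint with respect to G, is an irreducible so(p,q)-module under the commutator action S·A = SA − AS: every linear subspace of so(p,q)⁺ that is invariant under commutation with all elements of so(p,q) is either {0} or all of so(p,q)⁺. -/
open Matrix

/-- The signs `a_i` of the flat metric of signature `(p,q)`. -/
def metricSign (p : ℕ) {n : ℕ} (i : Fin n) : ℝ := if (i : ℕ) < p then 1 else -1

/-- The diagonal matrix `G = diag(a₁, …, aₙ)`. -/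
noncomputable def Gmat (p : ℕ) (n : ℕ) : Matrix (Fin n) (Fin n) ℝ :=
  Matrix.diagonal (fun i => metricSign p i)

/-!
Put `ε_ij = a_i a_j`, `S_ij = E_ij - ε_ij E_ji ∈ so(p,q)`, `B_ij = E_ij + ε_ij E_ji` and
`H_ij = E_ii - E_jj` (`soGen`, `plusGen`, `diagGen` below). For `G`-self-adjoint `A`,
`ad(S_ij)⁴ A + ε_ij ad(S_ij)² A = 12 (A_ij B_ij + ½ (A_ii - A_jj) H_ij)`, so an invariant `W`
containing `A` with `A_ij ≠ 0` contains this component; bracketing it with `S_ki` for a third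
index `k` and projecting again along `(k, j)` leaves a nonzero multiple of
`B_kj`. A nonzero traceless `A` without off-diagonal entries has `A_ii ≠ A_jj` for some `i, j`,
and then `[S_ij, A]` has `(i, j)`-entry `A_jj - A_ii`. Once a single `B_ij` lies in `W`, brackets
with the `S_ki` move it to every `B_kl`, `[S_kl, B_kl] = 2 ε_kl H_kl`, and the `B_kl` and `H_kl`
span `so(p,q)⁺`.
-/

theorem Matrix.eq_zero_of_isScalar_of_trace_eq_zero {m K : Type*} [Fintype m] [Field K]
    [CharZero K] {A : Matrix m m K}
    (hoff : ∀ i j, i ≠ j → A i j = 0) (hdiag : ∀ i j, A i i = A j j) (htr : A.trace = 0) :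
    A = 0 := by
  ext i j
  obtain rfl | hij := eq_or_ne i j
  · have htr' : (Fintype.card m : K) * A i i = 0 := by
      rw [← htr, trace, Finset.sum_congr rfl fun k _ => (diag_apply A k).trans (hdiag k i)]
      simp
    exact (mul_eq_zero.1 htr').resolve_left (Nat.cast_ne_zero.2 (Fintype.card_pos_iff.2 ⟨i⟩).ne')
  · exact hoff i j hij

namespace SoPlus

attribute [local instance] LieRing.ofAssociativeRing LieAlgebra.ofAssociativeAlgebra

variable {n p : ℕ}

lemma metricSign_eq_one_or_neg_one (i : Fin n) :
    metricSign p i = 1 ∨ metricSign p i = -1 := by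
  unfold metricSign; split_ifs <;> simp

variable (p) in
def eps (i j : Fin n) : ℝ := metricSign p i * metricSign p j

lemma eps_self (i : Fin n) : eps p i i = 1 := by
  rcases metricSign_eq_one_or_neg_one (p := p) i with hi | hi <;> norm_num [eps, hi]

lemma eps_mul_self (i j : Fin n) : eps p i j * eps p i j = 1 := by
  rw [eps, mul_mul_mul_comm, ← eps, ← eps, eps_self, eps_self, one_mul]

lemma eps_comm (i j : Fin n) : eps p i j = eps p j i :=
  mul_comm _ _

lemma eps_eq_one_or_neg_one (i j : Fin n) : eps p i j = 1 ∨ eps p i j = -1 := by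
  rcases metricSign_eq_one_or_neg_one (p := p) i with hi | hi <;>
    rcases metricSign_eq_one_or_neg_one (p := p) j with hj | hj <;> norm_num [eps, hi, hj]

lemma eps_ne_zero (i j : Fin n) : eps p i j ≠ 0 :=
  left_ne_zero_of_mul_eq_one (eps_mul_self i j)

lemma apply_swap_eq_eps_mul {A : Matrix (Fin n) (Fin n) ℝ}
    (hA : Aᵀ * Gmat p n = Gmat p n * A) (k l : Fin n) : A l k = eps p k l * A k l := by
  have hlk := congrFun₂ hA l k
  simp only [Gmat, mul_diagonal, diagonal_mul, transpose_apply] at hlk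
  rcases metricSign_eq_one_or_neg_one (p := p) k with hk | hk <;>
    rcases metricSign_eq_one_or_neg_one (p := p) l with hl | hl <;>
    simp only [eps, hk, hl] at hlk ⊢ <;> linarith

variable (p) in
noncomputable def soGen (i j : Fin n) : Matrix (Fin n) (Fin n) ℝ :=
  single i j 1 - eps p i j • single j i 1

variable (p) in
noncomputable def plusGen (i j : Fin n) : Matrix (Fin n) (Fin n) ℝ :=
  single i j 1 + eps p i j • single j i 1

noncomputable def diagGen (i j : Fin n) : Matrix (Fin n) (Fin n) ℝ :=
  single i i 1 - single j j 1

lemma soGen_transpose_mul_add_eq_zero {i j : Fin n} (hij : i ≠ j) :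
    (soGen p i j)ᵀ * Gmat p n + Gmat p n * soGen p i j = 0 := by
  ext k l
  simp only [Gmat, soGen, Matrix.add_apply, mul_diagonal, diagonal_mul, transpose_apply,
    Matrix.sub_apply, Matrix.smul_apply, single_apply, smul_eq_mul, Matrix.zero_apply]
  rcases metricSign_eq_one_or_neg_one (p := p) i with hi | hi <;>
    rcases metricSign_eq_one_or_neg_one (p := p) j with hj | hj <;>
    split_ifs <;> simp_all [eps]

lemma lie_soGen_apply (i j : Fin n) (X : Matrix (Fin n) (Fin n) ℝ) (k l : Fin n) :
    ⁅soGen p i j, X⁆ k l =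
      (if k = i then X j l else 0) - eps p i j * (if k = j then X i l else 0)
        - ((if l = j then X k i else 0) - eps p i j * (if l = i then X k j else 0)) := by
  simp only [soGen, Ring.lie_def, sub_mul, mul_sub, smul_mul_assoc, mul_smul_comm,
    Matrix.sub_apply, Matrix.smul_apply, smul_eq_mul, mul_apply, single_apply, ite_mul, mul_ite,
    one_mul, mul_one, zero_mul, mul_zero, ite_and]
  simp [eq_comm]

lemma lie_soGen_apply_self {i j : Fin n} (hij : i ≠ j) (X : Matrix (Fin n) (Fin n) ℝ) :
    ⁅soGen p i j, X⁆ i j = X j j - X i i := by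
  simp [lie_soGen_apply, hij, hij.symm]

lemma lie_soGen_plusGen {i j : Fin n} (hij : i ≠ j) :
    ⁅soGen p i j, plusGen p i j⁆ = (2 * eps p i j) • diagGen i j := by
  simp only [soGen, plusGen, diagGen, Ring.lie_def, sub_mul, mul_sub, add_mul, mul_add,
    smul_mul_assoc, mul_smul_comm, single_mul_single_same, single_mul_single_of_ne, ne_eq,
    hij, hij.symm, not_false_eq_true, smul_zero, mul_one]
  rcases metricSign_eq_one_or_neg_one (p := p) i with hi | hi <;>
    rcases metricSign_eq_one_or_neg_one (p := p) j with hj | hj <;>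
    simp only [eps, hi, hj] <;> module

lemma lie_soGen_diagGen {i j : Fin n} (hij : i ≠ j) :
    ⁅soGen p i j, diagGen i j⁆ = (-2 : ℝ) • plusGen p i j := by
  simp only [soGen, plusGen, diagGen, Ring.lie_def, sub_mul, mul_sub,
    smul_mul_assoc, mul_smul_comm, single_mul_single_same, single_mul_single_of_ne, ne_eq,
    hij, hij.symm, not_false_eq_true, smul_zero, mul_one]
  module

lemma lie_soGen_plusGen_of_ne {i j k : Fin n} (hij : i ≠ j) (hki : k ≠ i) (hkj : k ≠ j) :
    ⁅soGen p k i, plusGen p i j⁆ = plusGen p k j := by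
  simp only [soGen, plusGen, Ring.lie_def, sub_mul, mul_sub, add_mul, mul_add,
    smul_mul_assoc, mul_smul_comm, single_mul_single_same, single_mul_single_of_ne, ne_eq,
    hij, hij.symm, hki, hki.symm, hkj, hkj.symm, not_false_eq_true, smul_zero, mul_one]
  rcases metricSign_eq_one_or_neg_one (p := p) i with hi | hi <;>
    rcases metricSign_eq_one_or_neg_one (p := p) j with hj | hj <;>
    rcases metricSign_eq_one_or_neg_one (p := p) k with hk | hk <;>
    simp only [eps, hi, hj, hk] <;> module

lemma lie_soGen_diagGen_of_ne {i j k : Fin n} (hij : i ≠ j) (hki : k ≠ i) (hkj : k ≠ j) :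
    ⁅soGen p k i, diagGen i j⁆ = plusGen p k i := by
  simp only [soGen, plusGen, diagGen, Ring.lie_def, sub_mul, mul_sub,
    smul_mul_assoc, mul_smul_comm, single_mul_single_same, single_mul_single_of_ne, ne_eq,
    hij, hij.symm, hki, hki.symm, hkj, hkj.symm, not_false_eq_true, smul_zero, mul_one]
  rcases metricSign_eq_one_or_neg_one (p := p) i with hi | hi <;>
    rcases metricSign_eq_one_or_neg_one (p := p) k with hk | hk <;>
    simp only [eps, hi, hk] <;> module

lemma plusGen_swap (i j : Fin n) : plusGen p j i = eps p i j • plusGen p i j := by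
  rw [plusGen, plusGen, smul_add, smul_smul, eps_mul_self, one_smul, eps_comm, add_comm]

/-- The entries with exactly one of the row and the column index in `{i, j}`. -/
def crossPart (i j : Fin n) (R : Matrix (Fin n) (Fin n) ℝ) : Matrix (Fin n) (Fin n) ℝ :=
  of fun k l => if (k = i ∨ k = j) ↔ (l = i ∨ l = j) then 0 else R k l

lemma lie_soGen_lie_soGen {i j : Fin n} (hij : i ≠ j) {R : Matrix (Fin n) (Fin n) ℝ}
    (hRij : R i j = 0) (hRji : R j i = 0) (hR : R i i = R j j) :
    ⁅soGen p i j, ⁅soGen p i j, R⁆⁆ = -eps p i j • crossPart i j R := by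
  ext k l
  simp only [lie_soGen_apply, crossPart, of_apply, Matrix.smul_apply, smul_eq_mul]
  by_cases hki : k = i <;> by_cases hkj : k = j <;> by_cases hli : l = i <;> by_cases hlj : l = j
  all_goals try exact absurd (hki.symm.trans hkj) hij
  all_goals try exact absurd (hli.symm.trans hlj) hij
  all_goals simp [hki, hkj, hli, hlj, hij, hij.symm, hRij, hRji, hR]

lemma crossPart_crossPart (i j : Fin n) (R : Matrix (Fin n) (Fin n) ℝ) :
    crossPart i j (crossPart i j R) = crossPart i j R := by
  ext k l; simp only [crossPart, of_apply]; split_ifs <;> rfl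

/-- `T = ad (soGen p i j)` has eigenvalues `0, ±λ, ±2λ` with `λ² = -ε_ij`, so `T⁴ + ε_ij T²`
vanishes on all but the `±2λ`-eigenspaces, i.e. the span of `plusGen p i j` and `diagGen i j`,
where it is multiplication by `12`. -/
lemma lie_soGen_four_add_eps_smul_of_decomp {i j : Fin n} (hij : i ≠ j) (a d : ℝ)
    {R : Matrix (Fin n) (Fin n) ℝ} (hRij : R i j = 0) (hRji : R j i = 0) (hRd : R i i = R j j) :
    ⁅soGen p i j, ⁅soGen p i j, ⁅soGen p i j, ⁅soGen p i j,
        a • plusGen p i j + d • diagGen i j + R⁆⁆⁆⁆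
      + eps p i j • ⁅soGen p i j, ⁅soGen p i j, a • plusGen p i j + d • diagGen i j + R⁆⁆
      = (12 : ℝ) • (a • plusGen p i j + d • diagGen i j) := by
  have hX := lie_soGen_lie_soGen (p := p) hij (R := crossPart i j R)
    (by simp [crossPart]) (by simp [crossPart]) (by simp [crossPart])
  rw [crossPart_crossPart] at hX
  simp only [lie_add, lie_smul, lie_soGen_plusGen hij, lie_soGen_diagGen hij,
    lie_soGen_lie_soGen hij hRij hRji hRd, hX]
  rcases eps_eq_one_or_neg_one (p := p) i j with hε | hε <;> simp only [hε] <;> module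

lemma lie_soGen_four_add_eps_smul {i j : Fin n} (hij : i ≠ j) {A : Matrix (Fin n) (Fin n) ℝ}
    (hA : Aᵀ * Gmat p n = Gmat p n * A) :
    ⁅soGen p i j, ⁅soGen p i j, ⁅soGen p i j, ⁅soGen p i j, A⁆⁆⁆⁆
        + eps p i j • ⁅soGen p i j, ⁅soGen p i j, A⁆⁆
      = (12 : ℝ) • (A i j • plusGen p i j + ((A i i - A j j) / 2) • diagGen i j) := by
  have key := lie_soGen_four_add_eps_smul_of_decomp (p := p) hij (A i j) ((A i i - A j j) / 2)
    (R := A - (A i j • plusGen p i j + ((A i i - A j j) / 2) • diagGen i j))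
    (by simp [plusGen, diagGen, hij, hij.symm])
    (by simp [plusGen, diagGen, hij, hij.symm, apply_swap_eq_eps_mul hA i j, mul_comm])
    (by simp [plusGen, diagGen, hij, hij.symm]; ring)
  rwa [add_sub_cancel] at key

lemma plusGen_self_sub_plusGen_self (k l : Fin n) :
    plusGen p k k - plusGen p l l = (2 : ℝ) • diagGen k l := by
  simp only [plusGen, diagGen, eps_self, one_smul]
  module

lemma two_smul_eq_sum_plusGen {A : Matrix (Fin n) (Fin n) ℝ}
    (hA : Aᵀ * Gmat p n = Gmat p n * A) : (2 : ℝ) • A = ∑ k, ∑ l, A k l • plusGen p k l := by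
  have hterm (k l : Fin n) : A k l • plusGen p k l = single k l (A k l) + single l k (A l k) := by
    simp [plusGen, apply_swap_eq_eps_mul hA k l, mul_comm]
  simp only [hterm, Finset.sum_add_distrib]
  rw [Finset.sum_comm (f := fun k l => single l k (A l k)), ← matrix_eq_sum_single, two_smul]

lemma sum_apply_smul_plusGen_sub_eq {A : Matrix (Fin n) (Fin n) ℝ} (htr : A.trace = 0)
    (j : Fin n) :
    ∑ k, ∑ l, A k l • (plusGen p k l - if k = l then plusGen p j j else 0)
      = ∑ k, ∑ l, A k l • plusGen p k l := by
  simp only [smul_sub, smul_ite, smul_zero, Finset.sum_sub_distrib, Finset.sum_ite_eq,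
    Finset.mem_univ, if_true, ← Finset.sum_smul]
  rw [show ∑ k, A k k = A.trace from rfl, htr, zero_smul, sub_zero]

lemma plusGen_swap_mem {W : Submodule ℝ (Matrix (Fin n) (Fin n) ℝ)} {i j : Fin n}
    (hB : plusGen p i j ∈ W) : plusGen p j i ∈ W := by
  rw [plusGen_swap]
  exact W.smul_mem _ hB

variable (p) in
def IsSoInvariant (W : Submodule ℝ (Matrix (Fin n) (Fin n) ℝ)) : Prop :=
  ∀ S : Matrix (Fin n) (Fin n) ℝ, Sᵀ * Gmat p n + Gmat p n * S = 0 → ∀ A ∈ W, ⁅S, A⁆ ∈ W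

namespace IsSoInvariant

variable {W : Submodule ℝ (Matrix (Fin n) (Fin n) ℝ)} (hW : IsSoInvariant p W)
include hW

lemma lie_soGen_mem {i j : Fin n} (hij : i ≠ j) {A : Matrix (Fin n) (Fin n) ℝ} (hA : A ∈ W) :
    ⁅soGen p i j, A⁆ ∈ W :=
  hW _ (soGen_transpose_mul_add_eq_zero hij) A hA

lemma smul_plusGen_add_smul_diagGen_mem {i j : Fin n} (hij : i ≠ j)
    {A : Matrix (Fin n) (Fin n) ℝ} (hAW : A ∈ W) (hA : Aᵀ * Gmat p n = Gmat p n * A) :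
    A i j • plusGen p i j + ((A i i - A j j) / 2) • diagGen i j ∈ W := by
  have h := W.add_mem
    (hW.lie_soGen_mem hij <| hW.lie_soGen_mem hij <| hW.lie_soGen_mem hij <|
      hW.lie_soGen_mem hij hAW)
    (W.smul_mem (eps p i j) <| hW.lie_soGen_mem hij <| hW.lie_soGen_mem hij hAW)
  rwa [lie_soGen_four_add_eps_smul hij hA, Submodule.smul_mem_iff _ (by norm_num)] at h

lemma plusGen_mem_of_apply_ne_zero (hWsymm : ∀ A ∈ W, Aᵀ * Gmat p n = Gmat p n * A)
    {A : Matrix (Fin n) (Fin n) ℝ} (hAW : A ∈ W) {i j k : Fin n} (hij : i ≠ j) (hAij : A i j ≠ 0)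
    (hki : k ≠ i) (hkj : k ≠ j) : plusGen p k j ∈ W := by
  set d := (A i i - A j j) / 2
  have hw : A i j • plusGen p k j + d • plusGen p k i ∈ W := by
    have h := hW.lie_soGen_mem hki (hW.smul_plusGen_add_smul_diagGen_mem hij hAW (hWsymm A hAW))
    rwa [lie_add, lie_smul, lie_smul, lie_soGen_plusGen_of_ne hij hki hkj,
      lie_soGen_diagGen_of_ne hij hki hkj] at h
  have h := hW.smul_plusGen_add_smul_diagGen_mem hkj hw (hWsymm _ hw)
  have hwkj : (A i j • plusGen p k j + d • plusGen p k i) k j = A i j := by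
    simp [plusGen, hij, hkj]
  have hwkk : (A i j • plusGen p k j + d • plusGen p k i) k k = 0 := by
    simp [plusGen, hki.symm, hkj.symm]
  have hwjj : (A i j • plusGen p k j + d • plusGen p k i) j j = 0 := by
    simp [plusGen, hij, hkj]
  rwa [hwkj, hwkk, hwjj, sub_self, zero_div, zero_smul, add_zero,
    Submodule.smul_mem_iff _ hAij] at h

lemma exists_offDiag_apply_ne_zero (htr : ∀ A ∈ W, A.trace = 0) (hbot : W ≠ ⊥) :
    ∃ A ∈ W, ∃ i j, i ≠ j ∧ A i j ≠ 0 := by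
  obtain ⟨A, hAW, hA⟩ := (Submodule.ne_bot_iff W).1 hbot
  by_contra! hoff
  refine hA (eq_zero_of_isScalar_of_trace_eq_zero (hoff A hAW) (fun i j => ?_) (htr A hAW))
  obtain rfl | hij := eq_or_ne i j
  · rfl
  · have h := hoff _ (hW.lie_soGen_mem hij hAW) i j hij
    rw [lie_soGen_apply_self hij] at h
    linarith

lemma exists_plusGen_mem (h3 : 3 ≤ n)
    (hW1 : ∀ A ∈ W, Aᵀ * Gmat p n = Gmat p n * A ∧ A.trace = 0) (hbot : W ≠ ⊥) :
    ∃ i j, i ≠ j ∧ plusGen p i j ∈ W := by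
  obtain ⟨A, hAW, i, j, hij, hAij⟩ :=
    hW.exists_offDiag_apply_ne_zero (fun A hA => (hW1 A hA).2) hbot
  obtain ⟨k, hki, hkj⟩ := Fin.exists_ne_and_ne_of_two_lt i j h3
  exact ⟨k, j, hkj,
    hW.plusGen_mem_of_apply_ne_zero (fun A hA => (hW1 A hA).1) hAW hij hAij hki hkj⟩

lemma plusGen_mem_of_ne_left {i j k : Fin n} (hij : i ≠ j) (hB : plusGen p i j ∈ W)
    (hkj : k ≠ j) : plusGen p k j ∈ W := by
  obtain rfl | hki := eq_or_ne k i
  · exact hB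
  · simpa [lie_soGen_plusGen_of_ne hij hki hkj] using hW.lie_soGen_mem hki hB

lemma plusGen_mem_of_plusGen_mem {i j k l : Fin n} (hij : i ≠ j) (hB : plusGen p i j ∈ W)
    (hkl : k ≠ l) : plusGen p k l ∈ W := by
  obtain rfl | hlj := eq_or_ne l j
  · exact hW.plusGen_mem_of_ne_left hij hB hkl
  · have hjl := plusGen_swap_mem (hW.plusGen_mem_of_ne_left hij hB hlj)
    exact hW.plusGen_mem_of_ne_left hlj.symm hjl hkl

lemma diagGen_mem {i j : Fin n} (hij : i ≠ j) (hB : plusGen p i j ∈ W) : diagGen i j ∈ W := by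
  have h := hW.lie_soGen_mem hij hB
  rwa [lie_soGen_plusGen hij,
    Submodule.smul_mem_iff _ (mul_ne_zero two_ne_zero (eps_ne_zero i j))] at h

lemma mem_of_plusGen_mem {i j : Fin n} (hij : i ≠ j) (hB : plusGen p i j ∈ W)
    {A : Matrix (Fin n) (Fin n) ℝ} (hA : Aᵀ * Gmat p n = Gmat p n * A) (htr : A.trace = 0) :
    A ∈ W := by
  rw [← Submodule.smul_mem_iff W (two_ne_zero (α := ℝ)), two_smul_eq_sum_plusGen hA,
    ← sum_apply_smul_plusGen_sub_eq htr j]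
  refine W.sum_mem fun k _ => W.sum_mem fun l _ => W.smul_mem _ ?_
  split_ifs with hkl
  · rw [hkl, plusGen_self_sub_plusGen_self]
    obtain rfl | hlj := eq_or_ne l j
    · simp [diagGen]
    · exact W.smul_mem _ (hW.diagGen_mem hlj (hW.plusGen_mem_of_plusGen_mem hij hB hlj))
  · rw [sub_zero]
    exact hW.plusGen_mem_of_plusGen_mem hij hB hkl

end IsSoInvariant

end SoPlus

theorem soPlus_irreducible_general (p n : ℕ) (h3 : 3 ≤ n) :
    ∀ W : Submodule ℝ (Matrix (Fin n) (Fin n) ℝ),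
      (∀ A ∈ W, Aᵀ * Gmat p n = Gmat p n * A ∧ A.trace = 0) →
      (∀ S : Matrix (Fin n) (Fin n) ℝ, Sᵀ * Gmat p n + Gmat p n * S = 0 →
        ∀ A ∈ W, S * A - A * S ∈ W) →
      W = ⊥ ∨
        (∀ A : Matrix (Fin n) (Fin n) ℝ,
          Aᵀ * Gmat p n = Gmat p n * A → A.trace = 0 → A ∈ W) := by
  intro W hW1 hW2
  have hW : SoPlus.IsSoInvariant p W := hW2
  refine or_iff_not_imp_left.2 fun hbot A hA htr => ?_
  obtain ⟨i, j, hij, hB⟩ := hW.exists_plusGen_mem h3 hW1 hbot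
  exact hW.mem_of_plusGen_mem hij hB hA htr

/-- For `n = p + q ≥ 3`, the space `so(p,q)⁺` of traceless `G`-self-adjoint matrices
is an irreducible `so(p,q)`-module under the commutator action: any subspace of
`so(p,q)⁺` invariant under commutation with all of `so(p,q)` is `{0}` or all of
`so(p,q)⁺`. -/
theorem soPlus_irreducible (p q n : ℕ) (hn : n = p + q) (h3 : 3 ≤ n) :
    ∀ W : Submodule ℝ (Matrix (Fin n) (Fin n) ℝ),
      (∀ A ∈ W, Aᵀ * Gmat p n = Gmat p n * A ∧ A.trace = 0) →
      (∀ S : Matrix (Fin n) (Fin n) ℝ, Sᵀ * Gmat p n + Gmat p n * S = 0 →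
        ∀ A ∈ W, S * A - A * S ∈ W) →
      W = ⊥ ∨
        (∀ A : Matrix (Fin n) (Fin n) ℝ,
          Aᵀ * Gmat p n = Gmat p n * A → A.trace = 0 → A ∈ W) :=
  soPlus_irreducible_general p n h3
end

section
/- Let n = p + q ≥ 2. Every homogeneous quadratic polynomial vector field on ℝⁿ decomposes uniquely as a sum of a quadratic conformal field and a divergence-free quadratic field: Vect₂(ℝⁿ) = (Vect₂(ℝⁿ) ∩ conf_poly(p,q)) ⊕ ker(div), where div is restricted to Vect₂(ℝⁿ). Explicitly, for X ∈ Vect₂(ℝⁿ) with α ∈ (ℝⁿ)* defined by α(x) = div X, the field (1/n)α* is conformal and X − (1/n)α* is divergence-free, and the two summands intersect trivially. -/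
open MvPolynomial

/-- The divergence `div X = ∑_i ∂_i Xⁱ` of a polynomial vector field. -/
noncomputable def vdiv {n : ℕ} (Xv : VF n) : MvPolynomial (Fin n) ℝ :=
  ∑ i, pderiv i (Xv i)

/-- The conformal Killing equations for signature `(p,q)`. -/
def IsConformal (p : ℕ) {n : ℕ} (Xv : VF n) : Prop :=
  ∀ i j : Fin n, i ≠ j →
    metricSign p j • pderiv i (Xv j) + metricSign p i • pderiv j (Xv i) = 0 ∧
    pderiv i (Xv i) = pderiv j (Xv j)

/-- `α* = α(x) ∑_i xⁱ ∂_i − ½ (∑_i a_i (xⁱ)²) α♯` with `α♯ = ∑_i a_i α_i ∂_i`. -/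
noncomputable def alphaStar (p : ℕ) {n : ℕ} (α : Fin n → ℝ) : VF n :=
  fun i => (∑ j, C (α j) * MvPolynomial.X j) * MvPolynomial.X i
    - C ((1 : ℝ)/2) * (∑ j, C (metricSign p j) * (MvPolynomial.X j)^2)
      * C (metricSign p i * α i)

/-! `α*` is conformal and `∂ᵢ α*ⁱ = α(x)` for every `i`, so `div α* = n α`; subtracting
`(1/n) α*` with `α = div X` therefore removes the divergence of `X`.

Conversely, if `Y` is conformal then all `∂ᵢ Yⁱ` coincide, so `div Y = 0` forces them to vanish
and `Y` satisfies the Killing equations `aⱼ ∂ᵢ Yʲ + aᵢ ∂ⱼ Yⁱ = 0`. Then `aᵢ ∂ⱼ ∂ₖ Yⁱ` is symmetric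
in `(j, k)` and antisymmetric in `(i, k)`, hence zero, and by Euler's identity a homogeneous
quadratic polynomial all of whose second derivatives vanish is zero. -/

namespace MvPolynomial

variable {σ R : Type*}

theorem pderiv_pderiv_comm [CommRing R] (i j : σ) (f : MvPolynomial σ R) :
    pderiv i (pderiv j f) = pderiv j (pderiv i f) := by
  have h : ⁅pderiv (R := R) i, pderiv (R := R) j⁆ =
      (0 : Derivation R (MvPolynomial σ R) (MvPolynomial σ R)) := by
    classical
    refine derivation_ext fun k => ?_
    simp [Derivation.commutator_apply, pderiv_X, Pi.single_apply, apply_ite]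
  simpa [Derivation.commutator_apply, sub_eq_zero] using congr($h f)

variable [CommSemiring R] [Fintype σ]

theorem IsHomogeneous.eq_zero_of_forall_pderiv_eq_zero [IsAddTorsionFree (MvPolynomial σ R)]
    {f : MvPolynomial σ R} {n : ℕ} (hf : f.IsHomogeneous n) (hn : n ≠ 0)
    (hd : ∀ i, pderiv i f = 0) : f = 0 := by
  have euler := hf.sum_X_mul_pderiv
  simp only [hd, mul_zero, Finset.sum_const_zero] at euler
  exact (nsmul_eq_zero_iff.mp euler.symm).resolve_right hn

theorem IsHomogeneous.eq_sum_C_coeff_mul_X {f : MvPolynomial σ R} (hf : f.IsHomogeneous 1) :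
    f = ∑ j, C (coeff (Finsupp.single j 1) f) * X j := by
  have hconst (j : σ) : pderiv j f = C (coeff (Finsupp.single j 1) f) := by
    have h0 : (pderiv j f).IsHomogeneous 0 := hf.pderiv
    rw [← totalDegree_zero_iff_isHomogeneous, totalDegree_eq_zero_iff_eq_C] at h0
    simpa [coeff_pderiv] using h0
  simpa [hconst, mul_comm] using hf.sum_X_mul_pderiv.symm

theorem pderiv_sum_C_mul_X (α : σ → R) (k : σ) :
    pderiv k (∑ j, C (α j) * X j) = C (α k) := by
  classical
  simp [pderiv_X, Pi.single_apply]

theorem pderiv_sum_C_mul_X_sq (a : σ → R) (k : σ) :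
    pderiv k (∑ j, C (a j) * X j ^ 2) = C (2 * a k) * X k := by
  rw [map_sum, Finset.sum_eq_single_of_mem k (Finset.mem_univ k) fun j _ hjk => by
    rw [pderiv_C_mul, pderiv_pow, pderiv_X_of_ne hjk, mul_zero, mul_zero]]
  rw [pderiv_C_mul, pderiv_pow, pderiv_X_self, C_mul, map_ofNat]
  ring

end MvPolynomial

theorem eq_zero_of_symm_of_antisymm {ι G : Type*} [AddGroup G] [IsAddTorsionFree G]
    {P : ι → ι → ι → G} (hsymm : ∀ i j k, P i j k = P i k j)
    (hanti : ∀ i j k, P i j k = -P k j i) (i j k : ι) : P i j k = 0 := by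
  refine self_eq_neg.mp ?_
  calc P i j k = P i k j := hsymm i j k
    _ = -P j k i := hanti i k j
    _ = -P j i k := by rw [hsymm j k i]
    _ = P k i j := by rw [hanti j i k, neg_neg]
    _ = P k j i := hsymm k i j
    _ = -P i j k := hanti k j i

theorem metricSign_mul_self (p : ℕ) {n : ℕ} (i : Fin n) :
    metricSign p i * metricSign p i = 1 := by
  unfold metricSign; split_ifs <;> norm_num

theorem metricSign_ne_zero (p : ℕ) {n : ℕ} (i : Fin n) : metricSign p i ≠ 0 := by
  unfold metricSign; split_ifs <;> norm_num

section VectorFields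

variable {n : ℕ}

theorem vdiv_sub (X Y : VF n) : vdiv (X - Y) = vdiv X - vdiv Y := by
  simp [vdiv, Finset.sum_sub_distrib]

theorem vdiv_smul (c : ℝ) (X : VF n) : vdiv (c • X) = c • vdiv X := by
  simp [vdiv, Finset.smul_sum]

theorem isHomogeneous_vdiv {X : VF n} {k : ℕ} (hX : ∀ i, (X i).IsHomogeneous k) :
    (vdiv X).IsHomogeneous (k - 1) :=
  IsHomogeneous.sum _ _ _ fun i _ => (hX i).pderiv

theorem IsConformal.smul {p : ℕ} {X : VF n} (h : IsConformal p X) (c : ℝ) :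
    IsConformal p (c • X) := by
  intro i j hij
  obtain ⟨hkilling, hdiag⟩ := h i j hij
  simp only [Pi.smul_apply, Derivation.map_smul, smul_comm _ c, ← smul_add, hkilling, hdiag,
    smul_zero, and_self]

end VectorFields

section AlphaStar

variable (p : ℕ) {n : ℕ} (α : Fin n → ℝ)

theorem pderiv_alphaStar (k i : Fin n) :
    pderiv k (alphaStar p α i)
      = C (α k) * X i + (if k = i then ∑ j, C (α j) * X j else 0)
        - C (metricSign p k * metricSign p i * α i) * X k := by
  have half : C ((1 : ℝ) / 2) * C (2 * metricSign p k) * C (metricSign p i * α i)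
      = (C (metricSign p k * metricSign p i * α i) : MvPolynomial (Fin n) ℝ) := by
    simp only [← C_mul]; ring_nf
  unfold alphaStar
  simp only [map_sub, pderiv_mul, pderiv_sum_C_mul_X, pderiv_sum_C_mul_X_sq, pderiv_C]
  rcases eq_or_ne k i with rfl | hki
  · rw [pderiv_X_self, if_pos rfl]
    linear_combination (-X k) * half
  · rw [pderiv_X_of_ne hki.symm, if_neg hki]
    linear_combination (-X k) * half

theorem pderiv_alphaStar_self (i : Fin n) :
    pderiv i (alphaStar p α i) = ∑ j, C (α j) * X j := by
  rw [pderiv_alphaStar, if_pos rfl, metricSign_mul_self, one_mul]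
  ring

theorem isHomogeneous_alphaStar (i : Fin n) : (alphaStar p α i).IsHomogeneous 2 := by
  have hL : (∑ j, C (α j) * X j : MvPolynomial (Fin n) ℝ).IsHomogeneous 1 :=
    IsHomogeneous.sum _ _ _ fun j _ => isHomogeneous_C_mul_X _ _
  have hQ : (∑ j, C (metricSign p j) * X j ^ 2 : MvPolynomial (Fin n) ℝ).IsHomogeneous 2 :=
    IsHomogeneous.sum _ _ _ fun j _ => isHomogeneous_C_mul_X_pow _ _ _
  exact (hL.mul (isHomogeneous_X ℝ i)).sub
    (((isHomogeneous_C _ _).mul hQ).mul (isHomogeneous_C _ _))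

theorem alphaStar_isConformal : IsConformal p (alphaStar p α) := by
  intro i j hij
  refine ⟨?_, by rw [pderiv_alphaStar_self, pderiv_alphaStar_self]⟩
  have hsq (k : Fin n) :
      (C (metricSign p k) : MvPolynomial (Fin n) ℝ) * C (metricSign p k) = 1 := by
    rw [← C_mul, metricSign_mul_self, C_1]
  rw [pderiv_alphaStar, pderiv_alphaStar, if_neg hij, if_neg hij.symm]
  simp only [smul_eq_C_mul, C_mul]
  linear_combination (-(C (metricSign p j) * C (α i) * X j)) * hsq i
    - C (metricSign p i) * C (α j) * X i * hsq j

theorem vdiv_inv_natCast_smul_alphaStar :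
    vdiv ((n : ℝ)⁻¹ • alphaStar p α) = ∑ j, C (α j) * X j := by
  rcases Nat.eq_zero_or_pos n with rfl | hn
  · simp [vdiv]
  · rw [vdiv_smul, vdiv, Finset.sum_congr rfl fun i _ => pderiv_alphaStar_self p α i,
      Finset.sum_const, Finset.card_univ, Fintype.card_fin, ← Nat.cast_smul_eq_nsmul ℝ,
      inv_smul_smul₀ (Nat.cast_ne_zero.mpr hn.ne')]

end AlphaStar

theorem IsConformal.pderiv_self_eq_zero {p n : ℕ} {Y : VF n} (hY : IsConformal p Y)
    (hdiv : vdiv Y = 0) (i : Fin n) : pderiv i (Y i) = 0 := by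
  have hconst : vdiv Y = n • pderiv i (Y i) :=
    calc vdiv Y = ∑ _k : Fin n, pderiv i (Y i) := Finset.sum_congr rfl fun k _ => by
          rcases eq_or_ne k i with rfl | hki
          · rfl
          · exact (hY k i hki).2
      _ = n • pderiv i (Y i) := by simp
  rw [hconst, nsmul_eq_zero_iff] at hdiv
  exact hdiv.resolve_right i.pos.ne'

theorem IsConformal.eq_zero_of_vdiv_eq_zero {p n : ℕ} {Y : VF n}
    (hhom : ∀ i, (Y i).IsHomogeneous 2) (hY : IsConformal p Y) (hdiv : vdiv Y = 0) : Y = 0 := by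
  have hsecond (i j k : Fin n) : pderiv j (pderiv k (Y i)) = 0 := by
    have hP := eq_zero_of_symm_of_antisymm
      (P := fun i j k => metricSign p i • pderiv j (pderiv k (Y i)))
      (fun i j k => by rw [pderiv_pderiv_comm]) (fun i j k => ?_) i j k
    · exact (smul_eq_zero.mp hP).resolve_left (metricSign_ne_zero p i)
    rcases eq_or_ne i k with rfl | hik
    · simp [hY.pderiv_self_eq_zero hdiv]
    · have hkilling := congr(pderiv j $((hY k i hik.symm).1))
      simp only [map_add, Derivation.map_smul, map_zero] at hkilling
      exact eq_neg_of_add_eq_zero_left hkilling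
  funext i
  refine (hhom i).eq_zero_of_forall_pderiv_eq_zero two_ne_zero fun k => ?_
  exact (hhom i).pderiv.eq_zero_of_forall_pderiv_eq_zero one_ne_zero fun j => hsecond i j k

theorem vect2_decomposition_general (p n : ℕ) :
    (∀ Xv : VF n, (∀ i, (Xv i).IsHomogeneous 2) →
      IsConformal p ((n : ℝ)⁻¹ •
        alphaStar p (fun j => MvPolynomial.coeff (Finsupp.single j 1) (vdiv Xv))) ∧
      (∀ i, (((n : ℝ)⁻¹ •
        alphaStar p (fun j => MvPolynomial.coeff (Finsupp.single j 1) (vdiv Xv))) i).IsHomogeneous 2) ∧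
      vdiv (Xv - (n : ℝ)⁻¹ •
        alphaStar p (fun j => MvPolynomial.coeff (Finsupp.single j 1) (vdiv Xv))) = 0) ∧
    (∀ Yv : VF n, (∀ i, (Yv i).IsHomogeneous 2) →
      IsConformal p Yv → vdiv Yv = 0 → Yv = 0) := by
  refine ⟨fun Xv hX => ⟨(alphaStar_isConformal p _).smul _, fun i => ?_, ?_⟩,
    fun Yv hY hc hd => hc.eq_zero_of_vdiv_eq_zero hY hd⟩
  · rw [Pi.smul_apply, smul_eq_C_mul]
    exact (isHomogeneous_alphaStar p _ i).C_mul _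
  · rw [vdiv_sub, vdiv_inv_natCast_smul_alphaStar, sub_eq_zero]
    exact (isHomogeneous_vdiv hX).eq_sum_C_coeff_mul_X

/-- For `n = p + q ≥ 2`, every homogeneous quadratic vector field `X` decomposes as
`X = (1/n)α* + (X − (1/n)α*)` with `α(x) = div X`, where `(1/n)α*` is a quadratic
conformal field and `X − (1/n)α*` is divergence free; moreover a quadratic field
that is both conformal and divergence free vanishes (so the sum is direct):
`Vect₂(ℝⁿ) = (Vect₂(ℝⁿ) ∩ conf_poly(p,q)) ⊕ ker div`. -/
theorem vect2_decomposition (p q n : ℕ) (hn : n = p + q) (h2 : 2 ≤ n) :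
    (∀ Xv : VF n, (∀ i, (Xv i).IsHomogeneous 2) →
      IsConformal p ((n : ℝ)⁻¹ •
        alphaStar p (fun j => MvPolynomial.coeff (Finsupp.single j 1) (vdiv Xv))) ∧
      (∀ i, (((n : ℝ)⁻¹ •
        alphaStar p (fun j => MvPolynomial.coeff (Finsupp.single j 1) (vdiv Xv))) i).IsHomogeneous 2) ∧
      vdiv (Xv - (n : ℝ)⁻¹ •
        alphaStar p (fun j => MvPolynomial.coeff (Finsupp.single j 1) (vdiv Xv))) = 0) ∧
    (∀ Yv : VF n, (∀ i, (Yv i).IsHomogeneous 2) →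
      IsConformal p Yv → vdiv Yv = 0 → Yv = 0) :=
  vect2_decomposition_general p n
end

section
/- In the real Lie algebra ℂ[z] of polynomial holomorphic vector fields on ℂ, with bracket [f,g] = f g′ − g f′, the subspace of polynomials of degree at most 2 (a real Lie algebra isomorphic to sl(2,ℂ) viewed as a real Lie algebra, i.e. to so(3,1)) is a maximal Lie subalgebra: it is a proper real Lie subalgebra, and every real Lie subalgebra of ℂ[z] strictly containing it equals ℂ[z]. -/
/-!
Bracketing with `1` differentiates, so a bracket-closed subspace `S` containing the quadratics
and some `f` of degree `n ≥ 3` contains `f⁽ⁿ⁻³⁾`, of degree exactly `3`, hence a monomial `a z³`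
with `a ≠ 0`. Since `[b z, a z³] = 2ab z³` and `[z², c zᵏ] = (k - 2) c zᵏ⁺¹`, the monomials of
every degree, and therefore all polynomials, lie in `S`.
-/

open Polynomial

namespace Polynomial

noncomputable def vectorFieldBracket {R : Type*} [CommRing R] (f g : R[X]) : R[X] :=
  f * derivative g - g * derivative f

def IsBracketClosed {R : Type*} [CommRing R] (S : AddSubgroup R[X]) : Prop :=
  ∀ f ∈ S, ∀ g ∈ S, vectorFieldBracket f g ∈ S

section CommRing

variable {R : Type*} [CommRing R]

theorem vectorFieldBracket_quadratic (a b c d e k : R) :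
    vectorFieldBracket (C a * X ^ 2 + C b * X + C c) (C d * X ^ 2 + C e * X + C k) =
      C (b * d - a * e) * X ^ 2 + C (2 * (c * d - a * k)) * X + C (c * e - b * k) := by
  simp only [vectorFieldBracket, derivative_add, derivative_C_mul, derivative_C, derivative_X,
    derivative_X_pow, map_sub, map_mul, Nat.cast_ofNat, C_ofNat]
  ring

theorem degree_vectorFieldBracket_le_two {f g : R[X]} (hf : f.degree ≤ 2) (hg : g.degree ≤ 2) :
    (vectorFieldBracket f g).degree ≤ 2 := by
  rw [eq_quadratic_of_degree_le_two hf, eq_quadratic_of_degree_le_two hg,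
    vectorFieldBracket_quadratic]
  exact degree_quadratic_le

theorem vectorFieldBracket_monomial (i j : ℕ) (a b : R) :
    vectorFieldBracket (monomial i a) (monomial j b) =
      monomial (i + j - 1) (a * b * (j - i)) := by
  rw [vectorFieldBracket, derivative_monomial, derivative_monomial, monomial_mul_monomial,
    monomial_mul_monomial]
  rcases i with _ | i <;> rcases j with _ | j <;> simp
  · ring_nf
  · rw [← map_neg]
    ring_nf
  · rw [show j + 1 + i = i + 1 + j by omega, ← map_sub]
    ring_nf

theorem IsBracketClosed.iterate_derivative_mem {S : AddSubgroup R[X]} (hS : IsBracketClosed S)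
    (h1 : (1 : R[X]) ∈ S) {f : R[X]} (hf : f ∈ S) (k : ℕ) : derivative^[k] f ∈ S := by
  have hder : Set.MapsTo derivative (S : Set R[X]) S := fun g hg => by
    simpa [vectorFieldBracket] using hS 1 h1 g hg
  exact hder.iterate k hf

end CommRing

theorem natDegree_iterate_derivative_eq {R : Type*} [Semiring R] [IsAddTorsionFree R]
    (p : R[X]) (k : ℕ) : (derivative^[k] p).natDegree = p.natDegree - k := by
  induction k with
  | zero => rfl
  | succ k ih => rw [Function.iterate_succ_apply', natDegree_derivative, ih, Nat.sub_sub]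

theorem monomial_leadingCoeff_mem_of_natDegree_eq_three {R : Type*} [Ring R]
    {S : AddSubgroup R[X]} (hS₂ : ∀ f : R[X], f.degree ≤ 2 → f ∈ S) {g : R[X]} (hg : g ∈ S)
    (hg3 : g.natDegree = 3) : monomial 3 g.leadingCoeff ∈ S := by
  have herase : g.eraseLead.degree ≤ 2 :=
    degree_le_of_natDegree_le (n := 2) (by have := eraseLead_natDegree_le g; omega)
  have := S.sub_mem hg (hS₂ _ herase)
  rwa [← self_sub_monomial_natDegree_leadingCoeff, sub_sub_cancel, hg3] at this

section Field

variable {F : Type*} [Field F] [CharZero F] {S : AddSubgroup F[X]}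

theorem IsBracketClosed.monomial_three_mem (hS : IsBracketClosed S)
    (hS₂ : ∀ f : F[X], f.degree ≤ 2 → f ∈ S) {a : F} (ha : a ≠ 0) (h : monomial 3 a ∈ S)
    (c : F) : monomial 3 c ∈ S := by
  have hb : monomial 1 (c / (2 * a)) ∈ S :=
    hS₂ _ ((degree_monomial_le _ _).trans (by norm_num))
  have := hS _ hb _ h
  rw [vectorFieldBracket_monomial] at this
  convert this using 2
  field_simp
  norm_num

theorem IsBracketClosed.monomial_mem (hS : IsBracketClosed S)
    (hS₂ : ∀ f : F[X], f.degree ≤ 2 → f ∈ S) (h3 : ∀ c : F, monomial 3 c ∈ S) (n : ℕ) (c : F) :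
    monomial n c ∈ S := by
  rcases Nat.lt_or_ge n 3 with hn | hn
  · exact hS₂ _ ((degree_monomial_le _ _).trans (by exact_mod_cast (by omega : n ≤ 2)))
  induction n, hn using Nat.le_induction generalizing c with
  | base => exact h3 c
  | succ n hn ih =>
    have hn2 : (n : F) - 2 ≠ 0 := by
      rw [sub_ne_zero]
      exact_mod_cast (by omega : n ≠ 2)
    have := hS _ (hS₂ (monomial 2 1) (degree_monomial_le _ _)) _ (ih (c / (n - 2)))
    rwa [vectorFieldBracket_monomial, show 2 + n - 1 = n + 1 by omega, one_mul, Nat.cast_ofNat,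
      div_mul_cancel₀ _ hn2] at this

theorem IsBracketClosed.mem_of_not_degree_le_two (hS : IsBracketClosed S)
    (hS₂ : ∀ f : F[X], f.degree ≤ 2 → f ∈ S) {f : F[X]} (hf : f ∈ S) (hf2 : ¬ f.degree ≤ 2)
    (p : F[X]) : p ∈ S := by
  have hf3 : 3 ≤ f.natDegree := by
    by_contra h
    exact hf2 (degree_le_of_natDegree_le (n := 2) (by omega))
  set g := derivative^[f.natDegree - 3] f
  have hgS : g ∈ S := hS.iterate_derivative_mem (hS₂ 1 (degree_one_le.trans (by norm_num))) hf _
  have hg3 : g.natDegree = 3 := by rw [natDegree_iterate_derivative_eq]; omega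
  have hg0 : g.leadingCoeff ≠ 0 := leadingCoeff_ne_zero.mpr (by rintro h; simp [h] at hg3)
  have h3 := hS.monomial_three_mem hS₂ hg0
    (monomial_leadingCoeff_mem_of_natDegree_eq_three hS₂ hgS hg3)
  induction p using Polynomial.induction_on' with
  | add p q hp hq => exact S.add_mem hp hq
  | monomial n c => exact hS.monomial_mem hS₂ h3 n c

end Field

end Polynomial

/-- In the real Lie algebra `ℂ[z]` of polynomial holomorphic vector fields on ℂ
(with bracket `[f,g] = f g′ − g f′`), the polynomials of degree at most 2 form a
maximal real Lie subalgebra: it is proper, and any real Lie subalgebra strictly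
containing it is all of `ℂ[z]`. -/
theorem complex_degree_le_two_maximal :
    (∀ f g : Polynomial ℂ, f.degree ≤ 2 → g.degree ≤ 2 →
      (f * Polynomial.derivative g - g * Polynomial.derivative f).degree ≤ 2) ∧
    (∃ f : Polynomial ℂ, ¬ f.degree ≤ 2) ∧
    (∀ S : Submodule ℝ (Polynomial ℂ),
      (∀ f ∈ S, ∀ g ∈ S,
        f * Polynomial.derivative g - g * Polynomial.derivative f ∈ S) →
      (∀ f : Polynomial ℂ, f.degree ≤ 2 → f ∈ S) →
      (∃ f ∈ S, ¬ f.degree ≤ 2) →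
      S = ⊤) := by
  refine ⟨fun f g => degree_vectorFieldBracket_le_two, ⟨X ^ 3, by simp; decide⟩, ?_⟩
  rintro S hS hS₂ ⟨f, hf, hf2⟩
  have hS' : IsBracketClosed S.toAddSubgroup := hS
  exact Submodule.eq_top_iff'.mpr (hS'.mem_of_not_degree_le_two hS₂ hf hf2)
end

section
/- In the Lie algebra Vect_poly(ℝ) of polynomial vector fields on the line (real polynomials with bracket [f,g] = f g′ − g f′), the subalgebra of polynomials of degree at most 2 (isomorphic to sl(2,ℝ)) is maximal: it is proper, and every Lie subalgebra of Vect_poly(ℝ) strictly containing it equals Vect_poly(ℝ). -/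
open Polynomial

private lemma decomp2 (f : ℝ[X]) (h : f.degree ≤ 2) :
    ∃ a b c : ℝ, f = C a * X ^ 2 + C b * X + C c := by
  refine ⟨f.coeff 2, f.coeff 1, f.coeff 0, ?_⟩
  ext n
  rcases n with _ | _ | _ | n <;>
    simp [coeff_X, coeff_C]
  exact coeff_eq_zero_of_degree_lt (lt_of_le_of_lt h (by exact_mod_cast by omega))

private lemma nd_iter (f : ℝ[X]) (k : ℕ) (h : k ≤ f.natDegree) :
    ((derivative)^[k] f).natDegree = f.natDegree - k := by
  induction k with
  | zero => simp
  | succ n ih =>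
    rw [Function.iterate_succ_apply']
    have h1 : n ≤ f.natDegree := by omega
    have h2 : 0 < ((derivative)^[n] f).natDegree := by rw [ih h1]; omega
    have := natDegree_eq_of_degree_eq_some (degree_derivative_eq ((derivative)^[n] f) h2)
    rw [this, ih h1]; omega

/-- In the Lie algebra `Vect_poly(ℝ)` of polynomial vector fields on the line
(real polynomials with bracket `[f,g] = f g′ − g f′`), the subalgebra of
polynomials of degree at most 2 is maximal: it is proper, and any Lie subalgebra
strictly containing it is the whole `Vect_poly(ℝ)`. -/
theorem real_degree_le_two_maximal :
    (∀ f g : Polynomial ℝ, f.degree ≤ 2 → g.degree ≤ 2 →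
      (f * Polynomial.derivative g - g * Polynomial.derivative f).degree ≤ 2) ∧
    (∃ f : Polynomial ℝ, ¬ f.degree ≤ 2) ∧
    (∀ S : Submodule ℝ (Polynomial ℝ),
      (∀ f ∈ S, ∀ g ∈ S,
        f * Polynomial.derivative g - g * Polynomial.derivative f ∈ S) →
      (∀ f : Polynomial ℝ, f.degree ≤ 2 → f ∈ S) →
      (∃ f ∈ S, ¬ f.degree ≤ 2) →
      S = ⊤) := by
  refine ⟨?_, ⟨X ^ 3, by rw [degree_X_pow]; decide⟩, ?_⟩
  · intro f g hf hg
    obtain ⟨a, b, c, rfl⟩ := decomp2 f hf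
    obtain ⟨d, e, k, rfl⟩ := decomp2 g hg
    have : (C a * X ^ 2 + C b * X + C c) * derivative (C d * X ^ 2 + C e * X + C k)
        - (C d * X ^ 2 + C e * X + C k) * derivative (C a * X ^ 2 + C b * X + C c)
        = C (b * d - a * e) * X ^ 2 + C (2 * c * d - 2 * a * k) * X + C (c * e - b * k) := by
      simp only [derivative_add, derivative_mul, derivative_C, derivative_X_pow, derivative_X,
        map_sub, map_mul, map_ofNat, map_natCast, Nat.cast_ofNat]
      push_cast
      ring
    rw [this]
    exact degree_quadratic_le
  · intro S hbr h2 ⟨f, hfS, hfd⟩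
    have hder : ∀ p ∈ S, derivative p ∈ S := by
      intro p hp
      have h1 : (1 : ℝ[X]) ∈ S := h2 1 (by simp)
      have := hbr 1 h1 p hp
      simpa using this
    have hderIter : ∀ k, (derivative)^[k] f ∈ S := by
      intro k
      induction k with
      | zero => simpa
      | succ n ih => rw [Function.iterate_succ_apply']; exact hder _ ih
    have hnd : 3 ≤ f.natDegree := by
      by_contra h
      push_neg at h
      have : f.natDegree ≤ 2 := by omega
      exact hfd (degree_le_of_natDegree_le this)
    obtain ⟨g, hgS, hgnd⟩ : ∃ g ∈ S, g.natDegree = 3 :=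
      ⟨_, hderIter (f.natDegree - 3), by rw [nd_iter f _ (by omega)]; omega⟩
    have hgne : g ≠ 0 := fun h => by simp [h] at hgnd
    have hX3 : (X : ℝ[X]) ^ 3 ∈ S := by
      have he : g.eraseLead ∈ S := by
        have hle : g.eraseLead.natDegree ≤ 2 := by
          have := g.eraseLead_natDegree_le
          omega
        exact h2 _ (degree_le_of_natDegree_le hle)
      have hsub : C g.leadingCoeff * X ^ 3 ∈ S := by
        have h'' : g - g.eraseLead = C g.leadingCoeff * X ^ 3 := by
          rw [← hgnd, ← g.self_sub_C_mul_X_pow]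
          ring
        have := S.sub_mem hgS he
        rwa [h''] at this
      have hc : g.leadingCoeff ≠ 0 := leadingCoeff_ne_zero.mpr hgne
      have hsm : (g.leadingCoeff⁻¹ : ℝ) • (C g.leadingCoeff * X ^ 3) = X ^ 3 := by
        rw [smul_eq_C_mul, ← mul_assoc, ← C_mul, inv_mul_cancel₀ hc, C_1, one_mul]
      rw [← hsm]
      exact S.smul_mem _ hsub
    have hX2 : (X : ℝ[X]) ^ 2 ∈ S := h2 _ (by rw [degree_X_pow]; decide)
    have hpow : ∀ n, (X : ℝ[X]) ^ n ∈ S := by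
      intro n
      rcases le_or_gt n 2 with h | h
      · exact h2 _ (by rw [degree_X_pow]; exact_mod_cast Nat.cast_le.mpr h)
      · induction n with
        | zero => omega
        | succ m ih =>
          rcases Nat.lt_or_ge m 3 with hm | hm
          · have hm2 : m = 2 := by omega
            subst hm2; exact hX3
          · have hmS : (X : ℝ[X]) ^ m ∈ S := ih (by omega)
            have hb := hbr _ hX2 _ hmS
            obtain ⟨j, rfl⟩ : ∃ j, m = j + 3 := ⟨m - 3, by omega⟩
            have heq : (X : ℝ[X]) ^ 2 * derivative (X ^ (j + 3)) - X ^ (j + 3) * derivative (X ^ 2)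
                = C ((j : ℝ) + 1) * X ^ (j + 3 + 1) := by
              rw [derivative_X_pow, derivative_X_pow]
              norm_num
              push_cast
              simp only [show (C (3:ℝ)) = 3 from map_ofNat C 3, show (C (2:ℝ)) = 2 from map_ofNat C 2]
              ring
            rw [heq] at hb
            have hc : ((j : ℝ) + 1) ≠ 0 := by positivity
            have hsm : (((j : ℝ) + 1)⁻¹) • (C ((j : ℝ) + 1) * X ^ (j + 3 + 1)) = X ^ (j + 3 + 1) := by
              rw [smul_eq_C_mul, ← mul_assoc, ← C_mul, inv_mul_cancel₀ hc, C_1, one_mul]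
            rw [← hsm]
            exact S.smul_mem _ hb
    have hall : ∀ p : ℝ[X], p ∈ S := by
      intro p
      induction p using Polynomial.induction_on' with
      | add p q hp hq => exact S.add_mem hp hq
      | monomial n a =>
        rw [← C_mul_X_pow_eq_monomial, ← smul_eq_C_mul]
        exact S.smul_mem _ (hpow n)
    exact eq_top_iff.mpr fun p _ => hall p
end

section
/- In the product Lie algebra Vect_poly(ℝ) × Vect_poly(ℝ) (componentwise bracket, each factor being real polynomials with [f,g] = f g′ − g f′), the Lie subalgebra Vect_{≤2}(ℝ) × Vect_poly(ℝ), consisting of pairs whose first component has degree at most 2, is maximal: it is proper, and every Lie subalgebra of Vect_poly(ℝ) × Vect_poly(ℝ) strictly containing it is the whole product. (Via the coordinates u¹ = (x¹+x²)/2, u² = (x¹−x²)/2 this exhibits a maximal subalgebra of conf_poly(1,1) containing the image so(2,2)* of so(2,2).) -/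
open Polynomial

/-- The componentwise Lie bracket on `Vect_poly(ℝ) × Vect_poly(ℝ)`, each factor
being real polynomials with `[f,g] = f g′ − g f′`. -/
noncomputable def pbracket (x y : Polynomial ℝ × Polynomial ℝ) :
    Polynomial ℝ × Polynomial ℝ :=
  (x.1 * Polynomial.derivative y.1 - y.1 * Polynomial.derivative x.1,
   x.2 * Polynomial.derivative y.2 - y.2 * Polynomial.derivative x.2)

lemma natDeg_deriv' (p : ℝ[X]) (hp : 0 < p.natDegree) :
    (derivative p).natDegree = p.natDegree - 1 :=
  natDegree_eq_of_degree_eq_some (by rw [degree_derivative_eq p hp])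

lemma natDeg_iter' (k : ℕ) : ∀ p : ℝ[X], k ≤ p.natDegree →
    (derivative^[k] p).natDegree = p.natDegree - k := by
  induction k with
  | zero => simp
  | succ k ih =>
    intro p hk
    rw [Function.iterate_succ_apply, ih _ (by rw [natDeg_deriv' p (by omega)]; omega),
      natDeg_deriv' p (by omega)]
    omega

lemma bracket_deg_le (f g : ℝ[X]) (hf : f.degree ≤ 2) (hg : g.degree ≤ 2) :
    (f * derivative g - g * derivative f).degree ≤ 2 := by
  have hf3 : f.natDegree < 3 := by
    have h2 : f.degree ≤ (2:ℕ) := by exact_mod_cast hf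
    have := natDegree_le_iff_degree_le.mpr h2; omega
  have hg3 : g.natDegree < 3 := by
    have h2 : g.degree ≤ (2:ℕ) := by exact_mod_cast hg
    have := natDegree_le_iff_degree_le.mpr h2; omega
  rw [f.as_sum_range' 3 hf3, g.as_sum_range' 3 hg3]
  simp only [Finset.sum_range_succ, Finset.sum_range_zero, zero_add,
    ← C_mul_X_pow_eq_monomial]
  simp only [derivative_add, derivative_C_mul_X_pow, map_mul, map_ofNat]
  ring_nf
  compute_degree!

/-- In the product Lie algebra `Vect_poly(ℝ) × Vect_poly(ℝ)`, the Lie subalgebra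
`Vect_{≤2}(ℝ) × Vect_poly(ℝ)` of pairs whose first component has degree at most 2
is maximal: it is proper, and any Lie subalgebra strictly containing it is the
whole product. -/
theorem product_subalgebra_maximal :
    (∀ x y : Polynomial ℝ × Polynomial ℝ, x.1.degree ≤ 2 → y.1.degree ≤ 2 →
      (pbracket x y).1.degree ≤ 2) ∧
    (∃ x : Polynomial ℝ × Polynomial ℝ, ¬ x.1.degree ≤ 2) ∧
    (∀ S : Submodule ℝ (Polynomial ℝ × Polynomial ℝ),
      (∀ x ∈ S, ∀ y ∈ S, pbracket x y ∈ S) →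
      (∀ x : Polynomial ℝ × Polynomial ℝ, x.1.degree ≤ 2 → x ∈ S) →
      (∃ x ∈ S, ¬ x.1.degree ≤ 2) →
      S = ⊤) := by
  refine ⟨fun x y hx hy => bracket_deg_le x.1 y.1 hx hy, ⟨((X:ℝ[X])^3, 0), by
    simp only [degree_X_pow]
    decide⟩, ?_⟩
  rintro S hbr hle ⟨w, hwS, hwdeg⟩
  have h0 : ∀ g : ℝ[X], ((0 : ℝ[X]), g) ∈ S := fun g => hle (0, g) (by simp)
  set W : Submodule ℝ (Polynomial ℝ) :=
    Submodule.comap (LinearMap.inl ℝ (Polynomial ℝ) (Polynomial ℝ)) S with hWdef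
  have hWmem : ∀ f : ℝ[X], f ∈ W ↔ (f, (0:ℝ[X])) ∈ S := by
    intro f; rw [hWdef, Submodule.mem_comap, LinearMap.inl_apply]
  have hW2 : ∀ f : ℝ[X], f.degree ≤ 2 → f ∈ W := fun f hf => (hWmem f).mpr (hle (f, 0) hf)
  have hWbr : ∀ q f : ℝ[X], q.degree ≤ 2 → f ∈ W →
      q * derivative f - f * derivative q ∈ W := by
    intro q f hq hf
    have := hbr (q, 0) ((hWmem q).mpr (hle (q, 0) hq)) (f, 0) ((hWmem f).mp hf)
    rw [hWmem]
    simpa [pbracket] using this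
  have hD : ∀ f ∈ W, derivative f ∈ W := by
    intro f hf
    have := hWbr 1 f (le_trans degree_one_le (by decide)) hf
    simpa using this
  have hiter : ∀ k : ℕ, ∀ f ∈ W, derivative^[k] f ∈ W := by
    intro k
    induction k with
    | zero => intro f hf; simpa using hf
    | succ k ih =>
      intro f hf
      rw [Function.iterate_succ_apply]
      exact ih _ (hD f hf)
  -- w.1  is in W and has natDegree ≥ 3
  have hpW : w.1 ∈ W := by
    have hsub := S.sub_mem hwS (h0 w.2)
    have hww : w - (((0:ℝ[X]), w.2)) = (w.1, (0:ℝ[X])) := by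
      ext <;> simp
    rw [hWmem]
    rwa [hww] at hsub
  have hn3 : 3 ≤ w.1.natDegree := by
    by_contra h
    exact hwdeg (le_trans degree_le_natDegree (by
      have : w.1.natDegree ≤ 2 := by omega
      exact_mod_cast this))
  -- X^3 ∈ W
  set q : ℝ[X] := derivative^[w.1.natDegree - 3] w.1 with hq
  have hqW : q ∈ W := hiter _ _ hpW
  have hq3 : q.natDegree = 3 := by
    rw [hq, natDeg_iter' _ _ (by omega)]; omega
  have hqne : q.coeff 3 ≠ 0 := by
    rw [← hq3, coeff_natDegree, Ne, leadingCoeff_eq_zero]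
    intro h
    rw [h, natDegree_zero] at hq3
    omega
  have hr2 : (q - C (q.coeff 3) * X ^ 3).degree ≤ 2 := by
    rw [degree_le_iff_coeff_zero]
    intro m hm
    have hm3 : 3 ≤ m := by
      have h2 : (2:ℕ) < m := by exact_mod_cast hm
      omega
    rcases eq_or_lt_of_le hm3 with h | h
    · rw [← h, coeff_sub, coeff_C_mul, coeff_X_pow, if_pos rfl, mul_one, sub_self]
    · rw [coeff_sub, coeff_C_mul, coeff_X_pow, if_neg (by omega), mul_zero, sub_zero]
      exact coeff_eq_zero_of_natDegree_lt (by omega)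
  have hCX3 : C (q.coeff 3) * X ^ 3 ∈ W := by
    have := W.sub_mem hqW (hW2 _ hr2)
    simpa using this
  have hX3 : (X : ℝ[X]) ^ 3 ∈ W := by
    have := W.smul_mem (q.coeff 3)⁻¹ hCX3
    rwa [smul_eq_C_mul, ← mul_assoc, ← map_mul, inv_mul_cancel₀ hqne, map_one, one_mul] at this
  -- upward induction
  have hup : ∀ n : ℕ, 3 ≤ n → (X : ℝ[X]) ^ n ∈ W → (X : ℝ[X]) ^ (n + 1) ∈ W := by
    intro n hn hX
    have h := hWbr (X ^ 2) (X ^ n) (by rw [degree_X_pow]; exact_mod_cast le_rfl) hX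
    have key : (X:ℝ[X]) ^ 2 * derivative (X ^ n) - X ^ n * derivative (X ^ 2)
        = C ((n : ℝ) - 2) * X ^ (n + 1) := by
      rw [derivative_X_pow, derivative_X_pow]
      have h1 : (X:ℝ[X]) ^ 2 * X ^ (n - 1) = X ^ (n + 1) := by
        rw [← pow_add]; congr 1; omega
      have h2 : (X:ℝ[X]) ^ n * X ^ (2 - 1) = X ^ (n + 1) := by
        rw [← pow_add]
      calc (X:ℝ[X]) ^ 2 * (C (n:ℝ) * X ^ (n - 1)) - X ^ n * (C (2:ℝ) * X ^ (2 - 1))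
          = C (n:ℝ) * (X ^ 2 * X ^ (n - 1)) - C (2:ℝ) * (X ^ n * X ^ (2 - 1)) := by ring
        _ = C ((n:ℝ) - 2) * X ^ (n + 1) := by rw [h1, h2, map_sub, sub_mul]
    rw [key] at h
    have hne : (n : ℝ) - 2 ≠ 0 := by
      have : (3 : ℝ) ≤ n := by exact_mod_cast hn
      linarith
    have := W.smul_mem ((n : ℝ) - 2)⁻¹ h
    rwa [smul_eq_C_mul, ← mul_assoc, ← map_mul, inv_mul_cancel₀ hne, map_one, one_mul] at this
  have hmono : ∀ m : ℕ, (X : ℝ[X]) ^ m ∈ W := by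
    have haux : ∀ k : ℕ, (X : ℝ[X]) ^ (3 + k) ∈ W := by
      intro k
      induction k with
      | zero => simpa using hX3
      | succ k ih =>
        have := hup (3 + k) (by omega) ih
        rwa [show 3 + k + 1 = 3 + (k + 1) from by omega] at this
    intro m
    rcases le_or_gt m 2 with hm | hm
    · refine hW2 _ ?_
      rw [degree_X_pow]
      exact_mod_cast hm
    · have := haux (m - 3)
      rwa [show 3 + (m - 3) = m from by omega] at this
  have hWtop : ∀ f : ℝ[X], f ∈ W := by
    intro f
    rw [f.as_sum_range]
    refine Submodule.sum_mem W fun i _ => ?_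
    rw [← C_mul_X_pow_eq_monomial, ← smul_eq_C_mul]
    exact W.smul_mem _ (hmono i)
  rw [Submodule.eq_top_iff']
  intro z
  have h1 : (z.1, (0:ℝ[X])) ∈ S := (hWmem z.1).mp (hWtop z.1)
  have := S.add_mem h1 (h0 z.2)
  simpa using this
end
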